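/- arXiv:math/0512147 — 3 statements merged into one kernel-verified Lean document; each statement's English description precedes it below -/
import Mathlib

section
/- Let r ≥ 1 be an integer and a, b nonnegative integers. Set M = (r-1)a + b. Then r(r-1)a² + rb² - r·min(a,b) ≥ M(M-1). -/
lemma mul_sq_add_mul_sq_sub_min_sub_mul_pred_eq {R : Type*} [CommRing R] [LinearOrder R]
    (r a b : R) :
    r * (r - 1) * a ^ 2 + r * b ^ 2 - r * min a b - ((r - 1) * a + b) * (((r - 1) * a + b) - 1) =
      (r - 1) * (a - b) ^ 2 + (r - 1) * (a - min a b) + (b - min a b) := by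
  ring

theorem stmt0_general (r a b : ℤ) (hr : 1 ≤ r) :
    r * (r - 1) * a ^ 2 + r * b ^ 2 - r * min a b ≥
      ((r - 1) * a + b) * (((r - 1) * a + b) - 1) := by
  have hr₁ : 0 ≤ r - 1 := sub_nonneg.2 hr
  rw [ge_iff_le, ← sub_nonneg, mul_sq_add_mul_sq_sub_min_sub_mul_pred_eq]
  have ha_min : 0 ≤ a - min a b := sub_nonneg.2 (min_le_left a b)
  have hb_min : 0 ≤ b - min a b := sub_nonneg.2 (min_le_right a b)
  positivity

theorem stmt0 (r a b : ℤ) (hr : 1 ≤ r) (ha : 0 ≤ a) (hb : 0 ≤ b) :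
    r * (r - 1) * a ^ 2 + r * b ^ 2 - r * min a b ≥
      ((r - 1) * a + b) * (((r - 1) * a + b) - 1) :=
  stmt0_general r a b hr
end

section
/- Let r ≥ 2 and let m₁, ..., mᵣ be nonnegative integers all equal to a except one equal to b (i.e., the multiplicity vector is (a,...,a,b)). Then Σmᵢ² - min(m₁,...,mᵣ) = (r-1)a² + b² - min(a,b), and with M = Σmᵢ = (r-1)a + b, one has r·(Σmᵢ² - min(mᵢ)) ≥ M(M-1). -/
theorem stmt11 (r : ℕ) (hr : 2 ≤ r) (a b : ℤ) (ha : 0 ≤ a) (hb : 0 ≤ b)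
    (m : Fin r → ℤ) (i : Fin r) (hmi : m i = b) (hm : ∀ j, j ≠ i → m j = a) :
    (∑ j, (m j) ^ 2) - Finset.univ.inf' ⟨i, Finset.mem_univ i⟩ m =
        ((r : ℤ) - 1) * a ^ 2 + b ^ 2 - min a b ∧
      (r : ℤ) * ((∑ j, (m j) ^ 2) - Finset.univ.inf' ⟨i, Finset.mem_univ i⟩ m) ≥
        (∑ j, m j) * ((∑ j, m j) - 1) := by
  -- there exists j ≠ i
  obtain ⟨k, hk⟩ : ∃ k : Fin r, k ≠ i := by
    rcases Finset.exists_mem_ne (s := (Finset.univ : Finset (Fin r)))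
      (by rw [Finset.card_univ, Fintype.card_fin]; omega) i with ⟨k, -, hk⟩
    exact ⟨k, hk⟩
  have hsum : (∑ j, m j) = ((r : ℤ) - 1) * a + b := by
    rw [← Finset.add_sum_erase _ m (Finset.mem_univ i), hmi]
    have : ∑ j ∈ Finset.univ.erase i, m j = ∑ j ∈ Finset.univ.erase i, a :=
      Finset.sum_congr rfl fun j hj => hm j (Finset.mem_erase.mp hj).1
    rw [this, Finset.sum_const, Finset.card_erase_of_mem (Finset.mem_univ i),
      Finset.card_univ, Fintype.card_fin]
    have h1 : 1 ≤ r := le_trans (by norm_num) hr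
    rw [nsmul_eq_mul, Nat.cast_sub h1]; push_cast
    ring
  have hsumsq : (∑ j, (m j) ^ 2) = ((r : ℤ) - 1) * a ^ 2 + b ^ 2 := by
    rw [← Finset.add_sum_erase _ (fun j => m j ^ 2) (Finset.mem_univ i), hmi]
    have : ∑ j ∈ Finset.univ.erase i, m j ^ 2 = ∑ j ∈ Finset.univ.erase i, a ^ 2 :=
      Finset.sum_congr rfl fun j hj => by rw [hm j (Finset.mem_erase.mp hj).1]
    rw [this, Finset.sum_const, Finset.card_erase_of_mem (Finset.mem_univ i),
      Finset.card_univ, Fintype.card_fin]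
    have h1 : 1 ≤ r := le_trans (by norm_num) hr
    rw [nsmul_eq_mul, Nat.cast_sub h1]; push_cast
    ring
  have hinf : Finset.univ.inf' ⟨i, Finset.mem_univ i⟩ m = min a b := by
    apply le_antisymm
    · rcases le_total a b with h | h
      · have := Finset.inf'_le m (Finset.mem_univ k)
        rw [hm k hk] at this
        simpa [min_eq_left h] using this
      · have := Finset.inf'_le m (Finset.mem_univ i)
        rw [hmi] at this
        simpa [min_eq_right h] using this
    · apply Finset.le_inf'
      intro j _
      by_cases hj : j = i
      · rw [hj, hmi]; exact min_le_right a b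
      · rw [hm j hj]; exact min_le_left a b
  rw [hsum, hsumsq, hinf]
  refine ⟨rfl, ?_⟩
  have hr' : (2 : ℤ) ≤ (r : ℤ) := by exact_mod_cast hr
  rcases le_total a b with h | h
  · rw [min_eq_left h]
    nlinarith [sq_nonneg (a - b), mul_nonneg (sub_nonneg.mpr hr') (sq_nonneg (a - b))]
  · rw [min_eq_right h]
    nlinarith [sq_nonneg (a - b), mul_nonneg (sub_nonneg.mpr hr') (sq_nonneg (a - b)),
      mul_nonneg (by linarith : (0:ℤ) ≤ (r:ℤ) - 1) (sub_nonneg.mpr h)]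
end

section
/- Let r, l, d, M be positive integers with M(M-1) ≤ r·d²·l. Then d·l/M ≥ ⌊√(rl)⌋/r as rational numbers, i.e., r·d·l ≥ ⌊√(rl)⌋·M. -/
/-!
Write `s = ⌊√(rl)⌋`, so `s² ≤ rl`. If `M ≤ ds` then `sM ≤ ds² ≤ drl`. Otherwise `ds ≤ M - 1`,
so `d · sM ≤ M(M - 1) ≤ d²rl`, and cancelling `d` again gives `sM ≤ drl`.
-/

theorem Nat.mul_le_mul_of_mul_self_le_of_mul_sub_one_le {s n d M : ℕ} (hd : 0 < d)
    (hs : s * s ≤ n) (hM : M * (M - 1) ≤ d ^ 2 * n) : s * M ≤ d * n := by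
  rcases le_or_gt M (d * s) with hle | hlt
  · calc s * M ≤ s * (d * s) := Nat.mul_le_mul_left _ hle
      _ = d * (s * s) := by ring
      _ ≤ d * n := Nat.mul_le_mul_left _ hs
  · refine Nat.le_of_mul_le_mul_left ?_ hd
    calc d * (s * M) = d * s * M := by ring
      _ ≤ (M - 1) * M := Nat.mul_le_mul_right _ (Nat.le_sub_one_of_lt hlt)
      _ = M * (M - 1) := Nat.mul_comm _ _
      _ ≤ d ^ 2 * n := hM
      _ = d * (d * n) := by ring

-- `b = 0` is allowed: then `a / b = 0`.
theorem div_le_div_of_mul_le_mul {K : Type*} [Field K] [LinearOrder K] [IsStrictOrderedRing K]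
    {a b c d : K} (hb : 0 ≤ b) (hc : 0 ≤ c) (hd : 0 < d) (h : a * d ≤ b * c) :
    a / b ≤ c / d := by
  rw [le_div_iff₀ hd, div_mul_eq_mul_div]
  exact div_le_of_le_mul₀ hb hc (by rwa [mul_comm c])

theorem stmt16_general (r l d M : ℕ) (hd : 0 < d) (hM : 0 < M)
    (h : M * (M - 1) ≤ r * d ^ 2 * l) :
    ((d * l : ℚ) / M ≥ (Nat.sqrt (r * l) : ℚ) / r) ∧
      Nat.sqrt (r * l) * M ≤ r * d * l := by
  have key : Nat.sqrt (r * l) * M ≤ r * d * l := by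
    have := Nat.mul_le_mul_of_mul_self_le_of_mul_sub_one_le hd (Nat.sqrt_le (r * l))
      (n := r * l) (by rwa [show d ^ 2 * (r * l) = r * d ^ 2 * l by ring])
    rwa [show d * (r * l) = r * d * l by ring] at this
  refine ⟨div_le_div_of_mul_le_mul (by positivity) (by positivity) (by exact_mod_cast hM) ?_, key⟩
  rw [← mul_assoc]
  exact_mod_cast key

theorem stmt16 (r l d M : ℕ) (hr : 0 < r) (hl : 0 < l) (hd : 0 < d) (hM : 0 < M)
    (h : M * (M - 1) ≤ r * d ^ 2 * l) :
    ((d * l : ℚ) / M ≥ (Nat.sqrt (r * l) : ℚ) / r) ∧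
      Nat.sqrt (r * l) * M ≤ r * d * l :=
  stmt16_general r l d M hd hM h
end
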